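/- arXiv:2201.03759 — 3 statements merged into one kernel-verified Lean document; each statement's English description precedes it below -/
import Mathlib

section
/- Let f : ℝ^d → ℝ be twice continuously differentiable with mI ⪯ ∇²f(x) ⪯ MI for all x. Let P be a symmetric matrix with αI ⪯ P ⪯ βI, α > 0. For any x, y with s = y - x ≠ 0 and q = ∇f(y) - ∇f(x) + P s, it holds that m + α ≤ ‖q‖²/⟨q, s⟩ ≤ M + β. -/
/-!
By the fundamental theorem of calculus, `q = A s` for the symmetric operator
`A = ∫₀¹ ∇²f(x + t s) dt + P`, which satisfies `(m + α) I ⪯ A ⪯ (M + β) I`.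
The lower bound `(m + α) ⟪A s, s⟫ ≤ ‖A s‖²` is Cauchy–Schwarz together with
`(m + α) ‖s‖² ≤ ⟪A s, s⟫`. For the upper bound, Cauchy–Schwarz for the positive form
`⟪A ·, ·⟫` applied to `s` and `A s` gives `‖A s‖⁴ ≤ ⟪A s, s⟫ ⟪A (A s), A s⟫
≤ (M + β) ⟪A s, s⟫ ‖A s‖²`.
-/

open InnerProductSpace MeasureTheory

open scoped RealInnerProductSpace Gradient

section Calculus

variable {E F : Type*} [NormedAddCommGroup E] [NormedSpace ℝ E]
  [NormedAddCommGroup F] [NormedSpace ℝ F] [CompleteSpace F]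

theorem sub_eq_intervalIntegral_apply_of_hasFDerivAt {g : E → F} {g' : E → E →L[ℝ] F}
    (hg : ∀ z, HasFDerivAt g (g' z) z) (hg' : Continuous g') (x y : E) :
    g y - g x = (∫ t in (0 : ℝ)..1, g' (x + t • (y - x))) (y - x) := by
  have hcont : Continuous fun t : ℝ => g' (x + t • (y - x)) := by fun_prop
  have hderiv (t : ℝ) :
      HasDerivAt (fun t : ℝ => g (x + t • (y - x))) (g' (x + t • (y - x)) (y - x)) t := by
    refine (hg _).comp_hasDerivAt t ?_
    simpa using ((hasDerivAt_id t).smul_const (y - x)).const_add x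
  rw [ContinuousLinearMap.intervalIntegral_apply (hcont.intervalIntegrable 0 1),
    intervalIntegral.integral_eq_sub_of_hasDerivAt (fun t _ => hderiv t)
      ((hcont.clm_apply continuous_const).intervalIntegrable 0 1)]
  simp

end Calculus

variable {E : Type*} [NormedAddCommGroup E] [InnerProductSpace ℝ E]

theorem ContDiff.gradient [CompleteSpace E] {n : WithTop ℕ∞} {f : E → ℝ}
    (hf : ContDiff ℝ (n + 1) f) : ContDiff ℝ n (∇ f) :=
  (toDual ℝ E).symm.contDiff.comp (hf.fderiv_right le_rfl)

namespace LinearMap.IsPositive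

variable {T : E →ₗ[ℝ] E}

theorem inner_sq_le (hT : T.IsPositive) (u v : E) :
    ⟪T u, v⟫ ^ 2 ≤ ⟪T u, u⟫ * ⟪T v, v⟫ := by
  have := LinearMap.BilinForm.apply_mul_apply_le_of_forall_zero_le ((innerₗ E).compl₂ T)
    (fun w => (real_inner_comm _ _).trans_ge (hT.inner_nonneg_left w)) u v
  simp only [compl₂_apply, innerₗ_apply_apply, ← hT.isSymmetric u v, real_inner_comm v] at this
  rwa [sq, real_inner_comm u, real_inner_comm v (T v), real_inner_comm v]

theorem norm_sq_apply_le (hT : T.IsPositive) {b : ℝ} (hb : ∀ v, ⟪T v, v⟫ ≤ b * ‖v‖ ^ 2) (v : E) :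
    ‖T v‖ ^ 2 ≤ b * ⟪T v, v⟫ := by
  rcases eq_or_ne (T v) 0 with h0 | h0
  · simp [h0]
  have key : (‖T v‖ ^ 2) * ‖T v‖ ^ 2 ≤ (b * ⟪T v, v⟫) * ‖T v‖ ^ 2 := by
    calc (‖T v‖ ^ 2) * ‖T v‖ ^ 2 = ⟪T v, T v⟫ ^ 2 := by rw [real_inner_self_eq_norm_sq]; ring
      _ ≤ ⟪T v, v⟫ * ⟪T (T v), T v⟫ := hT.inner_sq_le v (T v)
      _ ≤ ⟪T v, v⟫ * (b * ‖T v‖ ^ 2) :=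
        mul_le_mul_of_nonneg_left (hb _) (hT.inner_nonneg_left v)
      _ = (b * ⟪T v, v⟫) * ‖T v‖ ^ 2 := by ring
  exact le_of_mul_le_mul_right key (by positivity)

end LinearMap.IsPositive

theorem mul_inner_le_norm_sq_of_mul_norm_sq_le_inner {a : ℝ} (ha : 0 ≤ a) {v w : E}
    (h : a * ‖v‖ ^ 2 ≤ ⟪w, v⟫) : a * ⟪w, v⟫ ≤ ‖w‖ ^ 2 := by
  have hcs := real_inner_le_norm w v
  have hv : 0 ≤ ‖v‖ * (‖w‖ - a * ‖v‖) := by nlinarith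
  nlinarith [sq_nonneg (‖w‖ - a * ‖v‖), mul_nonneg (mul_nonneg ha (norm_nonneg v)) hv]

theorem LinearMap.IsSymmetric.norm_sq_apply_div_inner_mem_Icc {T : E →ₗ[ℝ] E}
    (hT : T.IsSymmetric) {a b : ℝ} (ha : 0 < a) (hlow : ∀ v, a * ‖v‖ ^ 2 ≤ ⟪v, T v⟫)
    (hup : ∀ v, ⟪v, T v⟫ ≤ b * ‖v‖ ^ 2) {v : E} (hv : v ≠ 0) :
    ‖T v‖ ^ 2 / ⟪T v, v⟫ ∈ Set.Icc a b := by
  have hlow' (w : E) : a * ‖w‖ ^ 2 ≤ ⟪T w, w⟫ := real_inner_comm (T w) w ▸ hlow w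
  have hpos : T.IsPositive := ⟨hT, fun w => (mul_nonneg ha.le (sq_nonneg _)).trans (hlow' w)⟩
  have hTv : 0 < ⟪T v, v⟫ := (mul_pos ha (by positivity)).trans_le (hlow' v)
  constructor
  · rw [le_div_iff₀ hTv]
    exact mul_inner_le_norm_sq_of_mul_norm_sq_le_inner ha.le (hlow' v)
  · rw [div_le_iff₀ hTv]
    exact hpos.norm_sq_apply_le (fun w => real_inner_comm (T w) w ▸ hup w) v

section Average

variable {H : ℝ → E →L[ℝ] E} {a b : ℝ}

theorem IntervalIntegrable.inner_apply (hH : IntervalIntegrable H volume a b) (u v : E) :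
    IntervalIntegrable (fun t => ⟪u, H t v⟫) volume a b :=
  let L := (innerSL ℝ u).comp (ContinuousLinearMap.apply ℝ E v)
  ⟨L.integrable_comp hH.1, L.integrable_comp hH.2⟩

variable [CompleteSpace E]

theorem inner_intervalIntegral_apply (hH : IntervalIntegrable H volume a b) (u v : E) :
    ⟪u, (∫ t in a..b, H t) v⟫ = ∫ t in a..b, ⟪u, H t v⟫ :=
  (((innerSL ℝ u).comp (ContinuousLinearMap.apply ℝ E v)).intervalIntegral_comp_comm hH).symm

theorem isSymmetric_intervalIntegral (hH : IntervalIntegrable H volume a b)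
    (hsym : ∀ t, (H t : E →ₗ[ℝ] E).IsSymmetric) :
    ((∫ t in a..b, H t : E →L[ℝ] E) : E →ₗ[ℝ] E).IsSymmetric := by
  intro u v
  simp only [ContinuousLinearMap.coe_coe]
  rw [real_inner_comm, inner_intervalIntegral_apply hH, inner_intervalIntegral_apply hH]
  refine intervalIntegral.integral_congr fun t _ => ?_
  rw [real_inner_comm, ← ContinuousLinearMap.coe_coe, hsym t u v, ContinuousLinearMap.coe_coe]

theorem mul_norm_sq_le_inner_intervalIntegral_apply (hH : IntervalIntegrable H volume 0 1)
    {c : ℝ} {v : E} (h : ∀ t ∈ Set.Icc (0 : ℝ) 1, c * ‖v‖ ^ 2 ≤ ⟪v, H t v⟫) :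
    c * ‖v‖ ^ 2 ≤ ⟪v, (∫ t in (0 : ℝ)..1, H t) v⟫ := by
  rw [inner_intervalIntegral_apply hH]
  simpa using intervalIntegral.integral_mono_on zero_le_one intervalIntegrable_const
    (hH.inner_apply v v) h

theorem inner_intervalIntegral_apply_le_mul_norm_sq (hH : IntervalIntegrable H volume 0 1)
    {c : ℝ} {v : E} (h : ∀ t ∈ Set.Icc (0 : ℝ) 1, ⟪v, H t v⟫ ≤ c * ‖v‖ ^ 2) :
    ⟪v, (∫ t in (0 : ℝ)..1, H t) v⟫ ≤ c * ‖v‖ ^ 2 := by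
  rw [inner_intervalIntegral_apply hH]
  simpa using intervalIntegral.integral_mono_on zero_le_one (hH.inner_apply v v)
    intervalIntegrable_const h

end Average

theorem qs_ratio_bounds_general
    {d : ℕ} (f : EuclideanSpace ℝ (Fin d) → ℝ)
    (f' : EuclideanSpace ℝ (Fin d) → EuclideanSpace ℝ (Fin d))
    (hess : EuclideanSpace ℝ (Fin d) →
      (EuclideanSpace ℝ (Fin d) →L[ℝ] EuclideanSpace ℝ (Fin d)))
    (m M : ℝ) (hm : 0 < m)
    (hf : ContDiff ℝ 2 f)
    (hgrad : ∀ x, HasGradientAt f (f' x) x)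
    (hhess : ∀ x, HasFDerivAt f' (hess x) x)
    (hhess_sym : ∀ x v w, inner ℝ (hess x v) w = (inner ℝ v (hess x w) : ℝ))
    (hhess_low : ∀ x v, m * ‖v‖ ^ 2 ≤ inner ℝ v (hess x v))
    (hhess_up : ∀ x v, (inner ℝ v (hess x v) : ℝ) ≤ M * ‖v‖ ^ 2)
    (P : EuclideanSpace ℝ (Fin d) →L[ℝ] EuclideanSpace ℝ (Fin d))
    (α β : ℝ) (hα : 0 < α)
    (hP_sym : ∀ v w, inner ℝ (P v) w = (inner ℝ v (P w) : ℝ))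
    (hP_low : ∀ v, α * ‖v‖ ^ 2 ≤ inner ℝ v (P v))
    (hP_up : ∀ v, (inner ℝ v (P v) : ℝ) ≤ β * ‖v‖ ^ 2)
    (x y : EuclideanSpace ℝ (Fin d)) (s q : EuclideanSpace ℝ (Fin d))
    (hsdef : s = y - x) (hs : s ≠ 0)
    (hqdef : q = f' y - f' x + P s) :
    m + α ≤ ‖q‖ ^ 2 / inner ℝ q s ∧ ‖q‖ ^ 2 / (inner ℝ q s : ℝ) ≤ M + β := by
  have hhess_cont : Continuous hess := by
    have := (gradient_eq hgrad ▸ hf.gradient (n := 1)).continuous_fderiv one_ne_zero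
    rwa [show fderiv ℝ f' = hess from funext fun z => (hhess z).fderiv] at this
  set H := ∫ t in (0 : ℝ)..1, hess (x + t • s)
  have hH : IntervalIntegrable (fun t : ℝ => hess (x + t • s)) volume 0 1 :=
    (by fun_prop : Continuous fun t : ℝ => hess (x + t • s)).intervalIntegrable 0 1
  have hq : q = (H + P) s := by
    rw [hqdef, sub_eq_intervalIntegral_apply_of_hasFDerivAt hhess hhess_cont x y, ← hsdef]
    rfl
  subst hq
  have hsym := (isSymmetric_intervalIntegral hH fun t => hhess_sym _).add hP_sym
  refine hsym.norm_sq_apply_div_inner_mem_Icc (add_pos hm hα) (fun v => ?_) (fun v => ?_) hs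
  · have := mul_norm_sq_le_inner_intervalIntegral_apply hH (v := v) fun t _ => hhess_low _ v
    simp only [LinearMap.add_apply, ContinuousLinearMap.coe_coe, inner_add_right]
    linarith [hP_low v]
  · have := inner_intervalIntegral_apply_le_mul_norm_sq hH (v := v) fun t _ => hhess_up _ v
    simp only [LinearMap.add_apply, ContinuousLinearMap.coe_coe, inner_add_right]
    linarith [hP_up v]

/-- Bounds on ‖q‖²/⟨q,s⟩ for q built from gradient differences plus a
symmetric positive definite shift. -/
theorem qs_ratio_bounds
    {d : ℕ} (f : EuclideanSpace ℝ (Fin d) → ℝ)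
    (f' : EuclideanSpace ℝ (Fin d) → EuclideanSpace ℝ (Fin d))
    (hess : EuclideanSpace ℝ (Fin d) →
      (EuclideanSpace ℝ (Fin d) →L[ℝ] EuclideanSpace ℝ (Fin d)))
    (m M : ℝ) (hm : 0 < m) (hmM : m ≤ M)
    (hf : ContDiff ℝ 2 f)
    (hgrad : ∀ x, HasGradientAt f (f' x) x)
    (hhess : ∀ x, HasFDerivAt f' (hess x) x)
    (hhess_sym : ∀ x v w, inner ℝ (hess x v) w = (inner ℝ v (hess x w) : ℝ))
    (hhess_low : ∀ x v, m * ‖v‖ ^ 2 ≤ inner ℝ v (hess x v))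
    (hhess_up : ∀ x v, (inner ℝ v (hess x v) : ℝ) ≤ M * ‖v‖ ^ 2)
    (P : EuclideanSpace ℝ (Fin d) →L[ℝ] EuclideanSpace ℝ (Fin d))
    (α β : ℝ) (hα : 0 < α)
    (hP_sym : ∀ v w, inner ℝ (P v) w = (inner ℝ v (P w) : ℝ))
    (hP_low : ∀ v, α * ‖v‖ ^ 2 ≤ inner ℝ v (P v))
    (hP_up : ∀ v, (inner ℝ v (P v) : ℝ) ≤ β * ‖v‖ ^ 2)
    (x y : EuclideanSpace ℝ (Fin d)) (s q : EuclideanSpace ℝ (Fin d))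
    (hsdef : s = y - x) (hs : s ≠ 0)
    (hqdef : q = f' y - f' x + P s) :
    m + α ≤ ‖q‖ ^ 2 / inner ℝ q s ∧ ‖q‖ ^ 2 / (inner ℝ q s : ℝ) ≤ M + β :=
  qs_ratio_bounds_general f f' hess m M hm hf hgrad hhess hhess_sym hhess_low hhess_up P α β hα
    hP_sym hP_low hP_up x y s q hsdef hs hqdef
end

section
/- If a symmetric positive definite matrix H₀ = γI is updated c times by BFGS updates with pairs (sᵏ, qᵏ) satisfying sᵏ ≠ 0, ⟨sᵏ, qᵏ⟩ > 0, and ‖qᵏ‖²/⟨qᵏ, sᵏ⟩ ≤ K, then the resulting matrix Hᶜ satisfies ‖Hᶜ‖ ≤ Tr(Hᶜ) ≤ γ d + c K (operator norm). -/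
/-! The BFGS update removes the rank-one term `(Hs)(Hs)ᵀ / sᵀHs`, whose trace `‖Hs‖² / sᵀHs` is
nonnegative because `H` is positive semidefinite, and adds `qqᵀ / sᵀq`, whose trace is
`‖q‖² / sᵀq ≤ K`. So each update raises the trace by at most `K`, starting from `tr(γI) = γd`.
For a positive semidefinite matrix the operator norm is the largest eigenvalue, hence at most the
sum of the eigenvalues, which is the trace. -/

open Matrix

open scoped Matrix.Norms.L2Operator ComplexOrder in
theorem Matrix.PosSemidef.l2_opNorm_le_re_trace {n 𝕜 : Type*} [Fintype n] [DecidableEq n]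
    [RCLike 𝕜] {A : Matrix n n 𝕜} (hA : A.PosSemidef) : ‖A‖ ≤ RCLike.re A.trace := by
  have hev := hA.eigenvalues_nonneg
  calc ‖A‖ = ‖(diagonal (RCLike.ofReal ∘ hA.1.eigenvalues) : Matrix n n 𝕜)‖ := by
        rw [congrArg norm hA.1.spectral_theorem, Unitary.conjStarAlgAut_apply, ← Unitary.coe_star,
          CStarRing.norm_mul_coe_unitary, CStarRing.norm_coe_unitary_mul]
    _ ≤ ∑ i, hA.1.eigenvalues i := by
        rw [l2_opNorm_diagonal]
        refine (pi_norm_le_iff_of_nonneg (Finset.sum_nonneg fun i _ => hev i)).2 fun i => ?_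
        simpa [abs_of_nonneg (hev i)] using
          Finset.single_le_sum (fun j _ => hev j) (Finset.mem_univ i)
    _ = RCLike.re A.trace := by simp [hA.1.trace_eq_sum_eigenvalues]

section BFGS

variable {n : Type*} [Fintype n]

noncomputable def bfgsUpdate (H : Matrix n n ℝ) (s q : n → ℝ) : Matrix n n ℝ :=
  H - (s ⬝ᵥ H *ᵥ s)⁻¹ • vecMulVec (H *ᵥ s) (s ᵥ* H) + (s ⬝ᵥ q)⁻¹ • vecMulVec q q

theorem trace_bfgsUpdate {H : Matrix n n ℝ} (hH : H.IsSymm) (s q : n → ℝ) :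
    (bfgsUpdate H s q).trace
      = H.trace - (H *ᵥ s ⬝ᵥ H *ᵥ s) / (s ⬝ᵥ H *ᵥ s) + (q ⬝ᵥ q) / (s ⬝ᵥ q) := by
  rw [bfgsUpdate, ← vecMul_transpose, hH.eq, trace_add, trace_sub, trace_smul, trace_smul,
    trace_vecMulVec, trace_vecMulVec, smul_eq_mul, smul_eq_mul, inv_mul_eq_div, inv_mul_eq_div]

theorem trace_bfgsUpdate_le {H : Matrix n n ℝ} (hH : H.PosSemidef) (s q : n → ℝ) :
    (bfgsUpdate H s q).trace ≤ H.trace + (q ⬝ᵥ q) / (s ⬝ᵥ q) := by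
  have hsHs : 0 ≤ s ⬝ᵥ H *ᵥ s := by simpa using hH.dotProduct_mulVec_nonneg s
  have hHs : 0 ≤ H *ᵥ s ⬝ᵥ H *ᵥ s := by simpa using dotProduct_self_star_nonneg (H *ᵥ s)
  rw [trace_bfgsUpdate (isHermitian_iff_isSymm.1 hH.1)]
  linarith [div_nonneg hHs hsHs]

theorem trace_bfgs_iterate_le {c : ℕ} {K : ℝ} {H : ℕ → Matrix n n ℝ} {s q : ℕ → n → ℝ}
    (hK : ∀ u < c, (q u ⬝ᵥ q u) / (s u ⬝ᵥ q u) ≤ K)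
    (hH : ∀ u < c, H (u + 1) = bfgsUpdate (H u) (s u) (q u))
    (hpsd : ∀ u < c, (H u).PosSemidef) :
    (H c).trace ≤ (H 0).trace + c * K := by
  induction c with
  | zero => simp
  | succ c ih =>
    have hc := Nat.lt_succ_self c
    calc (H (c + 1)).trace ≤ (H c).trace + K := by
          rw [hH c hc]
          exact (trace_bfgsUpdate_le (hpsd c hc) _ _).trans (add_le_add_right (hK c hc) _)
      _ ≤ (H 0).trace + (c + 1 : ℕ) * K := by
          have hprev := ih (fun u hu => hK u (hu.trans hc)) (fun u hu => hH u (hu.trans hc))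
            (fun u hu => hpsd u (hu.trans hc))
          push_cast
          linarith

end BFGS

theorem lbfgs_trace_bound_general
    {d : ℕ} (c : ℕ) (γ K : ℝ)
    (H : ℕ → Matrix (Fin d) (Fin d) ℝ)
    (s q : ℕ → (Fin d → ℝ))
    (hH0 : H 0 = γ • (1 : Matrix (Fin d) (Fin d) ℝ))
    (hK : ∀ u, u < c → (q u ⬝ᵥ q u) / (s u ⬝ᵥ q u) ≤ K)
    (hrec : ∀ u, u < c → H (u + 1) = H u
        - (s u ⬝ᵥ (H u).mulVec (s u))⁻¹ •
            vecMulVec ((H u).mulVec (s u)) (vecMul (s u) (H u))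
        + (s u ⬝ᵥ q u)⁻¹ • vecMulVec (q u) (q u))
    (hpd : ∀ u, u ≤ c → (H u).PosDef) :
    ‖Matrix.toEuclideanCLM (𝕜 := ℝ) (H c)‖ ≤ (H c).trace
      ∧ (H c).trace ≤ γ * d + c * K := by
  have hpsd u (hu : u ≤ c) : (H u).PosSemidef := (hpd u hu).posSemidef
  refine ⟨(hpsd c le_rfl).l2_opNorm_le_re_trace, ?_⟩
  calc (H c).trace ≤ (H 0).trace + c * K :=
        trace_bfgs_iterate_le hK hrec fun u hu => hpsd u hu.le
    _ = γ * d + c * K := by simp [hH0, trace_smul]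

theorem lbfgs_trace_bound
    {d : ℕ} (c : ℕ) (γ K : ℝ) (hγ : 0 < γ)
    (H : ℕ → Matrix (Fin d) (Fin d) ℝ)
    (s q : ℕ → (Fin d → ℝ))
    (hH0 : H 0 = γ • (1 : Matrix (Fin d) (Fin d) ℝ))
    (hs : ∀ u, u < c → s u ≠ 0)
    (hsq : ∀ u, u < c → 0 < s u ⬝ᵥ q u)
    (hK : ∀ u, u < c → (q u ⬝ᵥ q u) / (s u ⬝ᵥ q u) ≤ K)
    (hrec : ∀ u, u < c → H (u + 1) = H u
        - (s u ⬝ᵥ (H u).mulVec (s u))⁻¹ •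
            vecMulVec ((H u).mulVec (s u)) (vecMul (s u) (H u))
        + (s u ⬝ᵥ q u)⁻¹ • vecMulVec (q u) (q u))
    (hpd : ∀ u, u ≤ c → (H u).PosDef) :
    ‖Matrix.toEuclideanCLM (𝕜 := ℝ) (H c)‖ ≤ (H c).trace
      ∧ (H c).trace ≤ γ * d + c * K :=
  lbfgs_trace_bound_general c γ K H s q hH0 hK hrec hpd
end

section
/- Let T : ℝⁿ → ℝⁿ, H a symmetric positive definite diagonal matrix, u⋆ a fixed point of T, and suppose 2⟨u − u⋆, H(Tu − u)⟩ + ‖Tu − u‖²_H ≤ −(δ/(1+δ))‖u − u⋆‖²_H for all u, where δ > 0. Let Ω^{t+1} be a random diagonal matrix with diagonal blocks equal to I or 0, independent at each step, with E[Ω^{t+1}] = Ω where Ω has diagonal entries p_i ≥ p_min > 0. Then the iteration u^{t+1} = u^t + Ω^{t+1}(Tu^t − u^t) satisfies E[‖u^{t+1} − u⋆‖²_{HΩ⁻¹} | u^t] ≤ (1 − p_min δ/(1+δ)) ‖u^t − u⋆‖²_{HΩ⁻¹}. -/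
open MeasureTheory

/-- Linear convergence in expectation of the randomized (asynchronous)
fixed-point iteration: one step, conditional on the current iterate. -/
theorem async_linear_convergence_step
    {n : ℕ} {Ω' : Type*} [MeasurableSpace Ω'] (μ : Measure Ω')
    [IsProbabilityMeasure μ]
    (T : (Fin n → ℝ) → (Fin n → ℝ)) (ustar : Fin n → ℝ)
    (hfix : T ustar = ustar)
    (h p : Fin n → ℝ) (pmin δ : ℝ)
    (hh : ∀ i, 0 < h i) (hpmin : 0 < pmin)
    (hp : ∀ i, pmin ≤ p i ∧ p i ≤ 1)
    (hδ : 0 < δ)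
    (hcontract : ∀ u : Fin n → ℝ,
      2 * ∑ i, h i * (u i - ustar i) * (T u i - u i)
          + ∑ i, h i * (T u i - u i) ^ 2
        ≤ -(δ / (1 + δ)) * ∑ i, h i * (u i - ustar i) ^ 2)
    (D : Ω' → Fin n → ℝ)
    (hDmeas : ∀ i, Measurable fun ω => D ω i)
    (hD01 : ∀ ω i, D ω i = 0 ∨ D ω i = 1)
    (hDmean : ∀ i, ∫ ω, D ω i ∂μ = p i)
    (u : Fin n → ℝ) :
    ∫ ω, ∑ i, (h i / p i) * (u i + D ω i * (T u i - u i) - ustar i) ^ 2 ∂μ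
      ≤ (1 - pmin * δ / (1 + δ)) * ∑ i, (h i / p i) * (u i - ustar i) ^ 2 := by
  have hppos : ∀ i, 0 < p i := fun i => lt_of_lt_of_le hpmin (hp i).1
  have hint : ∀ i : Fin n, Integrable (fun ω => D ω i) μ := by
    intro i
    refine Integrable.mono' (integrable_const 1) (hDmeas i).aestronglyMeasurable
      (ae_of_all _ fun ω => ?_)
    rcases hD01 ω i with hd | hd <;> simp [hd]
  have key : ∀ (ω : Ω') (i : Fin n),
      (u i + D ω i * (T u i - u i) - ustar i) ^ 2 =
      (u i - ustar i) ^ 2 +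
        D ω i * (2 * (u i - ustar i) * (T u i - u i) + (T u i - u i) ^ 2) := by
    intro ω i
    rcases hD01 ω i with hd | hd <;> rw [hd] <;> ring
  have hI : ∫ ω, ∑ i, (h i / p i) * (u i + D ω i * (T u i - u i) - ustar i) ^ 2 ∂μ
      = ∑ i, (h i / p i) * ((u i - ustar i) ^ 2 +
          p i * (2 * (u i - ustar i) * (T u i - u i) + (T u i - u i) ^ 2)) := by
    rw [integral_finset_sum]
    · refine Finset.sum_congr rfl fun i _ => ?_
      simp_rw [key]
      rw [integral_const_mul,
        integral_add (integrable_const _) ((hint i).mul_const _),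
        integral_const, integral_mul_const, hDmean i]
      simp [measure_univ, mul_comm]
    · intro i _
      simp_rw [key]
      exact (((integrable_const _).add ((hint i).mul_const _)).const_mul _)
  rw [hI]
  have hexp : ∑ i, (h i / p i) * ((u i - ustar i) ^ 2 +
        p i * (2 * (u i - ustar i) * (T u i - u i) + (T u i - u i) ^ 2))
      = (∑ i, (h i / p i) * (u i - ustar i) ^ 2) +
        (2 * ∑ i, h i * (u i - ustar i) * (T u i - u i)
          + ∑ i, h i * (T u i - u i) ^ 2) := by
    rw [Finset.mul_sum, ← Finset.sum_add_distrib, ← Finset.sum_add_distrib]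
    refine Finset.sum_congr rfl fun i _ => ?_
    have hne : p i ≠ 0 := (hppos i).ne'
    field_simp
  rw [hexp]
  have h1 := hcontract u
  have h2 : pmin * ∑ i, (h i / p i) * (u i - ustar i) ^ 2
      ≤ ∑ i, h i * (u i - ustar i) ^ 2 := by
    rw [Finset.mul_sum]
    refine Finset.sum_le_sum fun i _ => ?_
    have : pmin * (h i / p i) ≤ h i := by
      rw [mul_comm, div_mul_eq_mul_div, div_le_iff₀ (hppos i)]
      nlinarith [(hp i).1, (hh i).le]
    nlinarith [sq_nonneg (u i - ustar i)]
  have hδ' : 0 < δ / (1 + δ) := div_pos hδ (by linarith)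
  have h3 := mul_le_mul_of_nonneg_left h2 hδ'.le
  have heq : (1 - pmin * δ / (1 + δ)) * ∑ i, (h i / p i) * (u i - ustar i) ^ 2
      = (∑ i, (h i / p i) * (u i - ustar i) ^ 2)
        - δ / (1 + δ) * (pmin * ∑ i, (h i / p i) * (u i - ustar i) ^ 2) := by
    ring
  rw [heq]
  have h4 : -(δ / (1 + δ)) * ∑ i, h i * (u i - ustar i) ^ 2
      = -(δ / (1 + δ) * ∑ i, h i * (u i - ustar i) ^ 2) := by ring
  linarith [h1, h3]
end
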